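/- (Template descent inequality for DS-OptMD.) Let (X_t), (X_{t+1/2}) be DS-OptMD iterates in X with feedback (g_t) and positive nondecreasing learning rates (η_t). Then for every t ≥ 1 and every p ∈ X: η_{t+1} D(p, X_{t+1}) ≤ η_t D(p, X_t) − ⟨g_t, X_{t+1/2} − p⟩ + (η_{t+1} − η_t) D(p, X_1) + ⟨g_t − g_{t−1}, X_{t+1/2} − X_{t+1}⟩ − η_t D(X_{t+1}, X_{t+1/2}) − η_t D(X_{t+1/2}, X_t). -/

import Mathlib

open scoped RealInnerProductSpace
open Filter Finset Topology

noncomputable section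

/-- Bregman divergence of a regularizer `h` with gradient map `Gh`. -/
def breg {F : Type*} [NormedAddCommGroup F] [InnerProductSpace ℝ F]
    (h : F → ℝ) (Gh : F → F) (p x : F) : ℝ :=
  h p - h x - ⟪Gh x, p - x⟫

/-- `h` is a regularizer on `X`: a convex differentiable function with gradient map `Gh`
that is `1`-strongly convex on `X`. -/
structure IsRegularizer {F : Type*} [NormedAddCommGroup F] [InnerProductSpace ℝ F]
    (X : Set F) (h : F → ℝ) (Gh : F → F) : Prop where
  convex : ConvexOn ℝ Set.univ h
  grad : ∀ x : F, HasFDerivAt h (innerSL ℝ (Gh x)) x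
  strong : StrongConvexOn X 1 h

/-- DS-OptMD (dual-stabilized optimistic mirror descent) iterates: `Z t` is the base state
`X_t` and `W t` is the played action `X_{t+1/2}`, for feedback `g` (with `g 0 = 0`) and
positive nondecreasing learning rates `η`.  `X_{t+1/2}` minimizes
`p ↦ ⟨g_{t-1}, p⟩ + η_t D(p, X_t)` over `X` and `X_{t+1}` minimizes
`p ↦ ⟨g_t, p⟩ + η_t D(p, X_t) + (η_{t+1} - η_t) D(p, X_1)` over `X`. -/
structure IsDSOptMD {F : Type*} [NormedAddCommGroup F] [InnerProductSpace ℝ F]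
    (X : Set F) (h : F → ℝ) (Gh : F → F)
    (η : ℕ → ℝ) (g : ℕ → F) (Z W : ℕ → F) : Prop where
  g_zero : g 0 = 0
  eta_pos : ∀ t : ℕ, 1 ≤ t → 0 < η t
  eta_mono : ∀ t : ℕ, 1 ≤ t → η t ≤ η (t + 1)
  base_mem : ∀ t : ℕ, 1 ≤ t → Z t ∈ X
  lead_mem : ∀ t : ℕ, 1 ≤ t → W t ∈ X
  lead_min : ∀ t : ℕ, 1 ≤ t → ∀ p ∈ X,
    ⟪g (t - 1), W t⟫ + η t * breg h Gh (W t) (Z t)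
      ≤ ⟪g (t - 1), p⟫ + η t * breg h Gh p (Z t)
  base_min : ∀ t : ℕ, 1 ≤ t → ∀ p ∈ X,
    ⟪g t, Z (t + 1)⟫ + η t * breg h Gh (Z (t + 1)) (Z t)
        + (η (t + 1) - η t) * breg h Gh (Z (t + 1)) (Z 1)
      ≤ ⟪g t, p⟫ + η t * breg h Gh p (Z t) + (η (t + 1) - η t) * breg h Gh p (Z 1)

/-!
Both updates are Bregman proximal steps, so first-order optimality on the convex set `X`,
rewritten through the three-point identity
`⟪∇h x - ∇h y, p - x⟫ = D(p, y) - D(p, x) - D(x, y)`, gives a one-step inequality for each.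
Testing the base step at `p` and the leading step at `X_{t+1}` and adding, everything cancels
except the anchor term `(η_{t+1} - η_t) D(X_{t+1}, X_1)`, which is nonnegative because `h` is
convex and `η` is nondecreasing.
-/

theorem IsMinOn.hasFDerivAt_nonneg_of_convex {E : Type*} [NormedAddCommGroup E]
    [NormedSpace ℝ E] {s : Set E} {f : E → ℝ} {f' : E →L[ℝ] ℝ} {a y : E}
    (hs : Convex ℝ s) (hmin : IsMinOn f s a) (hf : HasFDerivAt f f' a)
    (ha : a ∈ s) (hy : y ∈ s) : 0 ≤ f' (y - a) :=
  hmin.localize.hasFDerivWithinAt_nonneg hf.hasFDerivWithinAt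
    (sub_mem_posTangentConeAt_of_segment_subset (hs.segment_subset ha hy))

section Bregman

variable {F : Type*} [NormedAddCommGroup F] [InnerProductSpace ℝ F] {h : F → ℝ} {Gh : F → F}

theorem inner_sub_grad_eq_breg (p x y : F) :
    ⟪Gh x - Gh y, p - x⟫ = breg h Gh p y - breg h Gh p x - breg h Gh x y := by
  simp only [breg, inner_sub_left, inner_sub_right]
  ring

theorem hasFDerivAt_breg_left (hgrad : ∀ x, HasFDerivAt h (innerSL ℝ (Gh x)) x) (z x : F) :
    HasFDerivAt (fun p => breg h Gh p z) (innerSL ℝ (Gh x - Gh z)) x := by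
  have hlin : HasFDerivAt (fun p => ⟪Gh z, p - z⟫) (innerSL ℝ (Gh z)) x := by
    simpa only [innerSL_apply_apply, inner_sub_right] using
      (innerSL ℝ (Gh z)).hasFDerivAt.sub_const ⟪Gh z, z⟫
  rw [map_sub]
  exact ((hgrad x).sub_const (h z)).sub hlin

theorem breg_nonneg (hconv : ConvexOn ℝ Set.univ h)
    (hgrad : ∀ x, HasFDerivAt h (innerSL ℝ (Gh x)) x) (p x : F) : 0 ≤ breg h Gh p x := by
  let line : ℝ →ᵃ[ℝ] F := AffineMap.lineMap x p
  have hline : ConvexOn ℝ Set.univ (h ∘ line) := hconv.comp_affineMap line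
  have hderiv : HasDerivAt (h ∘ line) ⟪Gh x, p - x⟫ 0 := by
    have hcurve : HasDerivAt line (p - x) 0 := AffineMap.hasDerivAt_lineMap
    simpa [line] using (hgrad (line 0)).comp_hasDerivAt 0 hcurve
  have hslope := hline.le_slope_of_hasDerivAt (Set.mem_univ 0) (Set.mem_univ 1) one_pos hderiv
  simp only [slope_def_field, Function.comp_apply, line, AffineMap.lineMap_apply_zero,
    AffineMap.lineMap_apply_one, sub_zero, div_one] at hslope
  simp only [breg]
  linarith

theorem inner_sub_le_of_isMinOn_breg {X : Set F} (hX : Convex ℝ X)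
    (hgrad : ∀ x, HasFDerivAt h (innerSL ℝ (Gh x)) x) {v z y w : F} {a b : ℝ}
    (hw : w ∈ X)
    (hmin : IsMinOn (fun q => ⟪v, q⟫ + a * breg h Gh q z + b * breg h Gh q y) X w)
    {p : F} (hp : p ∈ X) :
    ⟪v, w - p⟫ ≤ a * (breg h Gh p z - breg h Gh p w - breg h Gh w z)
      + b * (breg h Gh p y - breg h Gh p w - breg h Gh w y) := by
  have hderiv : HasFDerivAt
      (fun q => ⟪v, q⟫ + a * breg h Gh q z + b * breg h Gh q y)
      (innerSL ℝ v + a • innerSL ℝ (Gh w - Gh z) + b • innerSL ℝ (Gh w - Gh y)) w :=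
    ((innerSL ℝ v).hasFDerivAt.add ((hasFDerivAt_breg_left hgrad z w).const_mul a)).add
      ((hasFDerivAt_breg_left hgrad y w).const_mul b)
  have hfirst := hmin.hasFDerivAt_nonneg_of_convex hX hderiv hw hp
  simp only [add_apply, smul_apply, innerSL_apply_apply, smul_eq_mul,
    inner_sub_grad_eq_breg (h := h)] at hfirst
  rw [← neg_sub p w, inner_neg_right]
  linarith

end Bregman

theorem dsoptmd_template_descent_general
    {F : Type*} [NormedAddCommGroup F] [InnerProductSpace ℝ F]
    (X : Set F) (hXcv : Convex ℝ X)
    (h : F → ℝ) (Gh : F → F) (hreg : IsRegularizer X h Gh)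
    (η : ℕ → ℝ) (g : ℕ → F) (Z W : ℕ → F)
    (hrun : IsDSOptMD X h Gh η g Z W) :
    ∀ t : ℕ, 1 ≤ t → ∀ p ∈ X,
      η (t + 1) * breg h Gh p (Z (t + 1))
        ≤ η t * breg h Gh p (Z t)
            - ⟪g t, W t - p⟫
            + (η (t + 1) - η t) * breg h Gh p (Z 1)
            + ⟪g t - g (t - 1), W t - Z (t + 1)⟫
            - η t * breg h Gh (Z (t + 1)) (W t)
            - η t * breg h Gh (W t) (Z t) := by
  intro t ht p hp
  have hbase := inner_sub_le_of_isMinOn_breg hXcv hreg.grad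
    (hrun.base_mem (t + 1) (by omega)) (isMinOn_iff.mpr (hrun.base_min t ht)) hp
  have hlead := inner_sub_le_of_isMinOn_breg hXcv hreg.grad (y := Z t) (b := 0)
    (hrun.lead_mem t ht) (isMinOn_iff.mpr (by simpa using hrun.lead_min t ht))
    (hrun.base_mem (t + 1) (by omega))
  have hanchor : 0 ≤ (η (t + 1) - η t) * breg h Gh (Z (t + 1)) (Z 1) :=
    mul_nonneg (sub_nonneg.mpr (hrun.eta_mono t ht)) (breg_nonneg hreg.convex hreg.grad _ _)
  have hsplit : ⟪g t, W t - p⟫ = ⟪g t, W t - Z (t + 1)⟫ + ⟪g t, Z (t + 1) - p⟫ := by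
    rw [← inner_add_right, sub_add_sub_cancel]
  rw [hsplit, inner_sub_left]
  linear_combination hbase + hlead + hanchor

/-- Template descent inequality for DS-OptMD (Lemma 1, DS-OptMD case). -/
theorem dsoptmd_template_descent
    {F : Type*} [NormedAddCommGroup F] [InnerProductSpace ℝ F]
    (X : Set F) (hXne : X.Nonempty) (hXcl : IsClosed X) (hXcv : Convex ℝ X)
    (h : F → ℝ) (Gh : F → F) (hreg : IsRegularizer X h Gh)
    (η : ℕ → ℝ) (g : ℕ → F) (Z W : ℕ → F)
    (hrun : IsDSOptMD X h Gh η g Z W) :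
    ∀ t : ℕ, 1 ≤ t → ∀ p ∈ X,
      η (t + 1) * breg h Gh p (Z (t + 1))
        ≤ η t * breg h Gh p (Z t)
            - ⟪g t, W t - p⟫
            + (η (t + 1) - η t) * breg h Gh p (Z 1)
            + ⟪g t - g (t - 1), W t - Z (t + 1)⟫
            - η t * breg h Gh (Z (t + 1)) (W t)
            - η t * breg h Gh (W t) (Z t) :=
  dsoptmd_template_descent_general X hXcv h Gh hreg η g Z W hrun
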